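/- Let 1 < α < 2, b > 0, let M ≥ 2 be an integer and set h = b/M. Then for every complex vector u ∈ ℂ^{M−1}, with the discrete inner product (u,v) = h·∑_{i=1}^{M−1} u_i · conj(v_i) and ‖u‖² = (u,u), one has −(1/h^α) · Re(A_α u, u) ≥ −(2/(b^α · Γ(1−α))) · ‖u‖², and the right-hand side is strictly positive whenever u ≠ 0 (since Γ(1−α) < 0). -/

import Mathlib

/-- Grünwald–Letnikov coefficient `g_k^α = (-1)^k * binom(α,k)`. -/
noncomputable def gl (a : ℝ) (k : ℕ) : ℝ :=
  (-1 : ℝ) ^ k * (∏ j ∈ Finset.range k, (a - j)) / (Nat.factorial k : ℝ)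

/-- Shifted Grünwald weights. -/
noncomputable def glw (a : ℝ) : ℕ → ℝ
  | 0 => a / 2 * gl a 0
  | (k+1) => a / 2 * gl a (k+1) + (2 - a) / 2 * gl a k

/-- Second-order Lubich coefficients `l_m^{2,γ}`. -/
noncomputable def lub2 (g : ℝ) (m : ℕ) : ℝ :=
  (3/2 : ℝ) ^ g * ∑ k ∈ Finset.range (m+1), (1/3 : ℝ) ^ k * gl g k * gl g (m - k)

/-- The Toeplitz matrix `B_α` of size `(M-1) × (M-1)`. -/
noncomputable def Bmat (a : ℝ) (M : ℕ) : Matrix (Fin (M-1)) (Fin (M-1)) ℝ :=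
  fun i j => if (j : ℕ) ≤ (i : ℕ) + 1 then glw a ((i : ℕ) + 1 - (j : ℕ)) else 0

/-- The symmetric matrix `A_α = B_α + B_αᵀ`. -/
noncomputable def Amat (a : ℝ) (M : ℕ) : Matrix (Fin (M-1)) (Fin (M-1)) ℝ :=
  Bmat a M + (Bmat a M).transpose

/-!
`A_α` is symmetric with nonnegative off-diagonal entries (`w_0 + w_2 ≥ 0` and `w_k ≥ 0` for
`k ≥ 3`), so expanding `∑ a_ij ‖u_i - u_j‖² ≥ 0` bounds `Re (A_α u, u)` by the largest row sum
times `‖u‖²`. Each row sum of `A_α` splits into two partial sums of the weights. From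
`Γ(-α) k! g_k = Γ(k - α)` they telescope to `Γ(1 - α) ∑_{k ≤ t} w_k = Γ(t - α) (2t - α²) / (2 t!)`,
and log-convexity of `Γ` gives `t! ≤ Γ(t + 1 - α) t^α`. Hence `Γ(1 - α)` times each half is at
least `t^{-α} ≥ M^{-α}`, and `h^α M^α = b^α` finishes the computation.
-/

open Real Finset
open scoped Nat RealInnerProductSpace ComplexConjugate

section Coefficients

variable {a : ℝ}

lemma gl_zero (a : ℝ) : gl a 0 = 1 := by simp [gl]

lemma gl_succ (a : ℝ) (k : ℕ) : gl a (k + 1) = gl a k * ((k - a) / (k + 1)) := by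
  simp only [gl, prod_range_succ, Nat.factorial_succ, pow_succ]
  push_cast
  field_simp
  ring

lemma glw_zero (a : ℝ) : glw a 0 = a / 2 := by simp [glw, gl_zero]

lemma Gamma_neg_mul_factorial_mul_gl (ha : ∀ n : ℕ, a ≠ n) (k : ℕ) :
    Gamma (-a) * k ! * gl a k = Gamma (k - a) := by
  induction k with
  | zero => simp [gl_zero]
  | succ k ih =>
    have hk : (k : ℝ) - a ≠ 0 := sub_ne_zero.2 (ha k).symm
    rw [gl_succ, Nat.factorial_succ, show ((k + 1 : ℕ) : ℝ) - a = k - a + 1 by push_cast; ring,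
      Gamma_add_one hk, ← ih]
    push_cast
    field_simp

lemma Gamma_one_sub_eq_neg_mul (ha : a ≠ 0) : Gamma (1 - a) = -a * Gamma (-a) := by
  rw [← Gamma_add_one (neg_ne_zero.2 ha), neg_add_eq_sub]

lemma Gamma_one_sub_mul_sum_glw (ha : ∀ n : ℕ, a ≠ n) (t : ℕ) :
    2 * t ! * Gamma (1 - a) * ∑ k ∈ range (t + 1), glw a k = Gamma (t - a) * (2 * t - a ^ 2) := by
  have hΓ : Gamma (1 - a) = -a * Gamma (-a) := Gamma_one_sub_eq_neg_mul (by simpa using ha 0)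
  induction t with
  | zero => simp [glw_zero, hΓ]; ring
  | succ t ih =>
    have hg₀ := Gamma_neg_mul_factorial_mul_gl ha t
    have hg₁ := Gamma_neg_mul_factorial_mul_gl ha (t + 1)
    have hstep : Gamma ((t + 1 : ℕ) - a) = (t - a) * Gamma (t - a) := by
      rw [← Gamma_add_one (sub_ne_zero.2 (ha t).symm)]; push_cast; ring_nf
    rw [sum_range_succ, glw]
    rw [Nat.factorial_succ] at hg₁ ⊢
    rw [hstep] at hg₁ ⊢
    rw [hΓ] at ih ⊢
    push_cast at hg₁ ih ⊢
    linear_combination (t + 1) * ih - a ^ 2 * hg₁ - a * (2 - a) * (t + 1) * hg₀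

lemma Gamma_one_sub_neg (ha1 : 1 < a) (ha2 : a < 2) : Gamma (1 - a) < 0 := by
  have h : Gamma (2 - a) = (1 - a) * Gamma (1 - a) := by
    rw [← Gamma_add_one (by linarith)]; ring_nf
  have := Gamma_pos_of_pos (by linarith : 0 < 2 - a)
  nlinarith

lemma ne_natCast_of_one_lt_of_lt_two (ha1 : 1 < a) (ha2 : a < 2) (n : ℕ) : a ≠ n := by
  rintro rfl
  norm_cast at ha1 ha2
  omega

lemma Gamma_neg_pos (ha1 : 1 < a) (ha2 : a < 2) : 0 < Gamma (-a) := by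
  have := Gamma_one_sub_eq_neg_mul (a := a) (by linarith)
  nlinarith [Gamma_one_sub_neg ha1 ha2]

lemma gl_pos (ha1 : 1 < a) (ha2 : a < 2) {k : ℕ} (hk : 2 ≤ k) : 0 < gl a k := by
  have h := Gamma_neg_mul_factorial_mul_gl (ne_natCast_of_one_lt_of_lt_two ha1 ha2) k
  have hk' : (2 : ℝ) ≤ k := by exact_mod_cast hk
  have : 0 < Gamma (-a) * k ! := mul_pos (Gamma_neg_pos ha1 ha2) (by positivity)
  exact pos_of_mul_pos_right (h ▸ Gamma_pos_of_pos (by linarith)) this.le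

lemma glw_nonneg (ha1 : 1 < a) (ha2 : a < 2) {k : ℕ} (hk : 3 ≤ k) : 0 ≤ glw a k := by
  obtain ⟨k, rfl⟩ : ∃ m, k = m + 1 := ⟨k - 1, by omega⟩
  have := gl_pos ha1 ha2 (k := k + 1) (by omega)
  have := gl_pos ha1 ha2 (k := k) (by omega)
  simp only [glw]
  have : 0 < 2 - a := by linarith
  positivity

lemma glw_zero_add_glw_two_nonneg (ha : 1 ≤ a) : 0 ≤ glw a 0 + glw a 2 := by
  have : glw a 0 + glw a 2 = a * (a - 1) * (a + 2) / 4 := by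
    simp [glw, gl, prod_range_succ]; ring
  rw [this]
  have : 0 ≤ a - 1 := by linarith
  positivity

lemma Gamma_add_le_Gamma_mul_rpow {x s : ℝ} (hx : 0 < x) (hs0 : 0 ≤ s) (hs1 : s ≤ 1) :
    Gamma (x + s) ≤ Gamma x * x ^ s := by
  have hΓ := Gamma_pos_of_pos hx
  have hconv := convexOn_log_Gamma.2 (Set.mem_Ioi.2 hx) (Set.mem_Ioi.2 (by linarith : 0 < x + 1))
    (by linarith : 0 ≤ 1 - s) hs0 (by ring)
  simp only [smul_eq_mul, Function.comp_apply, Gamma_add_one hx.ne',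
    log_mul hx.ne' hΓ.ne', show (1 - s) * x + s * (x + 1) = x + s by ring] at hconv
  rw [← log_le_log_iff (Gamma_pos_of_pos (by linarith)) (by positivity),
    log_mul hΓ.ne' (by positivity), log_rpow hx]
  linarith

lemma Gamma_add_one_le_Gamma_mul_rpow {x : ℝ} (ha1 : 1 ≤ a) (ha2 : a ≤ 2) (hx : a - 1 < x) :
    Gamma (x + 1) ≤ Gamma (x + 1 - a) * x ^ a := by
  have hx0 : 0 < x := by linarith
  have h := Gamma_add_le_Gamma_mul_rpow (x := x + 1 - a) (s := a - 1) (by linarith)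
    (by linarith) (by linarith)
  rw [show x + 1 - a + (a - 1) = x by ring] at h
  have hmono : (x + 1 - a) ^ (a - 1) ≤ x ^ (a - 1) := rpow_le_rpow (by linarith) (by linarith)
    (by linarith)
  calc Gamma (x + 1) = x * Gamma x := Gamma_add_one hx0.ne'
    _ ≤ x * (Gamma (x + 1 - a) * x ^ (a - 1)) := by
      gcongr
      exact h.trans (mul_le_mul_of_nonneg_left hmono (Gamma_pos_of_pos (by linarith)).le)
    _ = Gamma (x + 1 - a) * x ^ a := by
      rw [rpow_sub_one hx0.ne']; field_simp

/-- `w_0 + ⋯ + w_t`, with `w_0` left out when `t = 1`. -/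
noncomputable def halfRowSum (a : ℝ) (t : ℕ) : ℝ := ∑ k ∈ Ico (2 - t) (t + 1), glw a k

lemma rpow_neg_le_Gamma_mul_halfRowSum (ha1 : 1 < a) (ha2 : a < 2) {t : ℕ} (ht : 1 ≤ t) :
    (t : ℝ) ^ (-a) ≤ Gamma (1 - a) * halfRowSum a t := by
  have ht' : (1 : ℝ) ≤ t := by exact_mod_cast ht
  have hfac : (t ! : ℝ) ≤ Gamma (t + 1 - a) * t ^ a := by
    rw [← Gamma_nat_eq_factorial]
    exact Gamma_add_one_le_Gamma_mul_rpow ha1.le ha2.le (by linarith)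
  suffices h : Gamma (t + 1 - a) ≤ t ! * (Gamma (1 - a) * halfRowSum a t) by
    have htpos : (0 : ℝ) < t ^ a := by positivity
    have : (0 : ℝ) < t ! := by positivity
    rw [rpow_neg (by positivity), inv_le_iff_one_le_mul₀' htpos]
    nlinarith [mul_le_mul_of_nonneg_right h htpos.le]
  rcases ht.eq_or_lt with rfl | ht2
  · have hw : halfRowSum a 1 = glw a 1 := by simp [halfRowSum]
    have hw1 : glw a 1 = (1 - a) * (2 + a) / 2 := by simp [glw, gl]; ring
    have hΓ : Gamma (2 - a) = (1 - a) * Gamma (1 - a) := by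
      rw [← Gamma_add_one (by linarith)]; ring_nf
    have := Gamma_pos_of_pos (by linarith : 0 < 2 - a)
    rw [hw, hw1, Nat.cast_one, one_add_one_eq_two, Nat.factorial_one, Nat.cast_one, one_mul]
    nlinarith
  · have hw : halfRowSum a t = ∑ k ∈ range (t + 1), glw a k := by
      rw [halfRowSum, Nat.sub_eq_zero_of_le ht2, range_eq_Ico]
    have hsum := Gamma_one_sub_mul_sum_glw (ne_natCast_of_one_lt_of_lt_two ha1 ha2) t
    have ht2' : (2 : ℝ) ≤ t := by exact_mod_cast ht2
    have hΓ : Gamma (t + 1 - a) = (t - a) * Gamma (t - a) := by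
      rw [← Gamma_add_one (by linarith)]; ring_nf
    have := Gamma_pos_of_pos (by linarith : 0 < (t : ℝ) - a)
    rw [hw, hΓ]
    calc (t - a) * Gamma (t - a) ≤ Gamma (t - a) * (2 * t - a ^ 2) / 2 := by
          nlinarith [mul_pos this (mul_pos (by linarith : 0 < a) (by linarith : 0 < 2 - a))]
      _ = _ := by linear_combination -hsum / 2

end Coefficients

lemma sum_range_ite_le_sub {R : Type*} [AddCommMonoid R] (f : ℕ → R) (m N : ℕ) :
    ∑ j ∈ range N, (if j ≤ m then f (m - j) else 0) = ∑ k ∈ Ico (m + 1 - N) (m + 1), f k := by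
  induction N with
  | zero => simp
  | succ N ih =>
    rw [sum_range_succ, ih]
    split_ifs with hN
    · rw [show m + 1 - (N + 1) = m - N by omega, sum_eq_sum_Ico_succ_bot (by omega : m - N < m + 1),
        show m - N + 1 = m + 1 - N by omega, add_comm]
    · rw [add_zero, show m + 1 - (N + 1) = m + 1 - N by omega]

section Matrices

variable {a : ℝ} {M : ℕ}

lemma sum_Bmat_row (i : Fin (M - 1)) :
    ∑ j, Bmat a M i j = ∑ k ∈ Ico ((i : ℕ) + 3 - M) (i + 2), glw a k := by
  have := sum_range_ite_le_sub (glw a) (i + 1) (M - 1)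
  rw [← Fin.sum_univ_eq_sum_range, show i + 1 + 1 - (M - 1) = (i : ℕ) + 3 - M by omega] at this
  exact this

lemma Bmat_rev_rev (i j : Fin (M - 1)) : Bmat a M i.rev j.rev = Bmat a M j i := by
  simp only [Bmat, Fin.val_rev]
  split_ifs <;> first | omega | congr 1 <;> omega

lemma sum_Bmat_col (i : Fin (M - 1)) :
    ∑ j, Bmat a M j i = ∑ k ∈ Ico (1 - (i : ℕ)) (M - i), glw a k := by
  calc ∑ j, Bmat a M j i = ∑ j, Bmat a M i.rev j.rev := by simp only [Bmat_rev_rev]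
    _ = ∑ j, Bmat a M i.rev j := Fintype.sum_bijective _ Fin.rev_bijective _ _ fun _ => rfl
    _ = _ := by
      rw [sum_Bmat_row, Fin.val_rev, show M - 1 - (i + 1) + 3 - M = 1 - (i : ℕ) by omega,
        show M - 1 - (i + 1) + 2 = M - i by omega]

lemma sum_Amat_row (i : Fin (M - 1)) :
    ∑ j, Amat a M i j = halfRowSum a (i + 1) + halfRowSum a (M - 1 - i) := by
  simp only [Amat, Matrix.add_apply, Matrix.transpose_apply, sum_add_distrib, sum_Bmat_row,
    sum_Bmat_col, halfRowSum]
  rw [show 2 - (i + 1) = 1 - (i : ℕ) by omega, show 2 - (M - 1 - i) = (i : ℕ) + 3 - M by omega,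
    show M - 1 - i + 1 = M - i by omega]
  -- the row part and the column part of the sum exchange their lower limits
  rw [sum_Ico_eq_sub _ (by omega), sum_Ico_eq_sub _ (by omega), sum_Ico_eq_sub _ (by omega),
    sum_Ico_eq_sub _ (by omega)]
  abel

lemma two_mul_rpow_neg_le_Gamma_mul_sum_Amat_row (ha1 : 1 < a) (ha2 : a < 2) (i : Fin (M - 1)) :
    2 * (M : ℝ) ^ (-a) ≤ Gamma (1 - a) * ∑ j, Amat a M i j := by
  have hhalf : ∀ t : ℕ, 1 ≤ t → t ≤ M → (M : ℝ) ^ (-a) ≤ Gamma (1 - a) * halfRowSum a t :=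
    fun t ht htM => (rpow_le_rpow_of_nonpos (by exact_mod_cast ht) (by exact_mod_cast htM)
      (by linarith)).trans (rpow_neg_le_Gamma_mul_halfRowSum ha1 ha2 ht)
  rw [sum_Amat_row, mul_add, two_mul]
  exact add_le_add (hhalf _ (by omega) (by omega)) (hhalf _ (by omega) (by omega))

lemma Amat_nonneg_of_ne (ha1 : 1 < a) (ha2 : a < 2) {i j : Fin (M - 1)} (hij : i ≠ j) :
    0 ≤ Amat a M i j := by
  have hij' : (i : ℕ) ≠ j := Fin.val_ne_of_ne hij
  have h02 := glw_zero_add_glw_two_nonneg ha1.le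
  simp only [Amat, Matrix.add_apply, Matrix.transpose_apply, Bmat]
  split_ifs with h₁ h₂ h₂
  · obtain h | h : (j : ℕ) = i + 1 ∨ (i : ℕ) = j + 1 := by omega
    · rwa [h, Nat.sub_self, show i + 1 + 1 - (i : ℕ) = 2 by omega]
    · rwa [h, Nat.sub_self, show j + 1 + 1 - (j : ℕ) = 2 by omega, add_comm]
  · simpa using glw_nonneg ha1 ha2 (by omega)
  · simpa using glw_nonneg ha1 ha2 (by omega)
  · omega

end Matrices

lemma sum_mul_inner_le_of_sum_row_le {ι E : Type*} [Fintype ι] [NormedAddCommGroup E]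
    [InnerProductSpace ℝ E] {C : Matrix ι ι ℝ} (hC : C.IsSymm) (hoff : ∀ i j, i ≠ j → 0 ≤ C i j)
    {c : ℝ} (hrow : ∀ i, ∑ j, C i j ≤ c) (v : ι → E) :
    ∑ i, ∑ j, C i j * ⟪v i, v j⟫ ≤ c * ∑ i, ‖v i‖ ^ 2 := by
  have hdiff : 0 ≤ ∑ i, ∑ j, C i j * ‖v i - v j‖ ^ 2 := by
    refine sum_nonneg fun i _ => sum_nonneg fun j _ => ?_
    rcases eq_or_ne i j with rfl | hij
    · simp
    · exact mul_nonneg (hoff i j hij) (sq_nonneg _)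
  have hswap : ∑ i, ∑ j, C i j * ‖v j‖ ^ 2 = ∑ i, ∑ j, C i j * ‖v i‖ ^ 2 := by
    rw [sum_comm]
    simp only [hC.apply]
  have hdiag : ∑ i, ∑ j, C i j * ‖v i‖ ^ 2 ≤ c * ∑ i, ‖v i‖ ^ 2 := by
    rw [mul_sum]
    gcongr with i
    rw [← sum_mul]
    exact mul_le_mul_of_nonneg_right (hrow i) (sq_nonneg _)
  simp only [norm_sub_sq_real, mul_add, mul_sub, sum_add_distrib, sum_sub_distrib] at hdiff
  simp only [← mul_sum, mul_left_comm _ (2 : ℝ)] at hdiff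
  linarith

lemma re_sum_mulVec_mul_conj {ι : Type*} [Fintype ι] (C : Matrix ι ι ℝ) (u : ι → ℂ) :
    (∑ i, Matrix.mulVec (C.map Complex.ofReal) u i * conj (u i)).re =
      ∑ i, ∑ j, C i j * ⟪u i, u j⟫ := by
  simp only [Matrix.mulVec, dotProduct, Matrix.map_apply, sum_mul, Complex.re_sum, mul_assoc,
    Complex.re_ofReal_mul, Complex.inner]

theorem stmt17 (α b : ℝ) (hα1 : 1 < α) (hα2 : α < 2) (hb : 0 < b)
    (M : ℕ) (hM : 2 ≤ M) (h : ℝ) (hh : h = b / M)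
    (u : Fin (M-1) → ℂ) :
    -(2 / (b ^ α * Real.Gamma (1 - α))) * (h * ∑ i, ‖u i‖ ^ 2) ≤
      -(1 / h ^ α) *
        ((h : ℂ) * ∑ i,
          (Matrix.mulVec ((Amat α M).map Complex.ofReal) u) i * (starRingEnd ℂ) (u i)).re ∧
    (u ≠ 0 → 0 < -(2 / (b ^ α * Real.Gamma (1 - α))) * (h * ∑ i, ‖u i‖ ^ 2)) := by
  have hM0 : (0 : ℝ) < M := Nat.cast_pos.2 (by omega)
  have hh0 : 0 < h := hh ▸ div_pos hb hM0
  have hG := Gamma_one_sub_neg hα1 hα2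
  set c := 2 * (M : ℝ) ^ (-α) / Gamma (1 - α) with hc
  have hrow (i) : ∑ j, Amat α M i j ≤ c := by
    rw [le_div_iff_of_neg hG, mul_comm (∑ j, _)]
    exact two_mul_rpow_neg_le_Gamma_mul_sum_Amat_row hα1 hα2 i
  have hquad := sum_mul_inner_le_of_sum_row_le (C := Amat α M) (Matrix.isSymm_add_transpose_self _)
    (fun _ _ => Amat_nonneg_of_ne hα1 hα2) hrow u
  have hcoef : 2 / (b ^ α * Gamma (1 - α)) = 1 / h ^ α * c := by
    rw [show b = h * M by rw [hh]; field_simp, mul_rpow hh0.le hM0.le, hc, rpow_neg hM0.le]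
    field_simp
  constructor
  · rw [Complex.re_ofReal_mul, re_sum_mulVec_mul_conj, hcoef]
    calc -(1 / h ^ α * c) * (h * ∑ i, ‖u i‖ ^ 2) = -(1 / h ^ α * h) * (c * ∑ i, ‖u i‖ ^ 2) := by
          ring
      _ ≤ -(1 / h ^ α * h) * ∑ i, ∑ j, Amat α M i j * ⟪u i, u j⟫ :=
          mul_le_mul_of_nonpos_left hquad (neg_nonpos.2 (by positivity))
      _ = _ := by ring
  · intro hu
    obtain ⟨i, hi⟩ := Function.ne_iff.1 hu
    have hsum : 0 < ∑ i, ‖u i‖ ^ 2 :=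
      sum_pos' (fun _ _ => by positivity) ⟨i, mem_univ _, pow_pos (norm_pos_iff.2 hi) 2⟩
    have : 2 / (b ^ α * Gamma (1 - α)) < 0 :=
      div_neg_of_pos_of_neg two_pos (mul_neg_of_pos_of_neg (by positivity) hG)
    exact mul_pos (neg_pos.2 this) (mul_pos hh0 hsum)
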